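/- arXiv:1409.3685 — 5 statements merged into one kernel-verified Lean document; each statement's English description precedes it below -/
import Mathlib

section
/- In the Marinatto–Weber scheme with initial state |ψ_in⟩ = (|00⟩+|01⟩)/√2 applied to the bimatrix game with payoffs (5,3),(1,1) in the top row and (1,1),(3,5) in the bottom row, the output game has payoff functions π₁(p,q) = 3p + 2(1−p) and π₂(p,q) = 2p + 3(1−p); in particular the payoffs are independent of player 2's strategy q. -/
/-! Player 2's flip `1 ⊗ σₓ` fixes `|ψ_in⟩ = (|00⟩ + |01⟩)/√2`, and `σₓ ⊗ σₓ = (σₓ ⊗ 1)(1 ⊗ σₓ)`, so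
`ρ_fin = p |ψ_in⟩⟨ψ_in| + (1 - p) |φ⟩⟨φ|` with `|φ⟩ = (|10⟩ + |11⟩)/√2`, whatever `q` is. The payoff
of the uniform superposition of the two outcomes in row `i` is the average of row `i` of the payoff
matrix: `(5 + 1)/2 = 3`, `(1 + 3)/2 = 2` for player 1 and `(3 + 1)/2 = 2`, `(1 + 5)/2 = 3` for player 2. -/

open Matrix Kronecker

noncomputable def sigmaX : Matrix (Fin 2) (Fin 2) ℂ := !![0, 1; 1, 0]

noncomputable def MWfinal (ρin : Matrix (Fin 2 × Fin 2) (Fin 2 × Fin 2) ℂ)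
    (p q : ℝ) : Matrix (Fin 2 × Fin 2) (Fin 2 × Fin 2) ℂ :=
  ((p * q : ℝ) : ℂ) • ((1 ⊗ₖ 1) * ρin * (1 ⊗ₖ 1)) +
  ((p * (1 - q) : ℝ) : ℂ) • ((1 ⊗ₖ sigmaX) * ρin * (1 ⊗ₖ sigmaX)) +
  (((1 - p) * q : ℝ) : ℂ) • ((sigmaX ⊗ₖ 1) * ρin * (sigmaX ⊗ₖ 1)) +
  (((1 - p) * (1 - q) : ℝ) : ℂ) • ((sigmaX ⊗ₖ sigmaX) * ρin * (sigmaX ⊗ₖ sigmaX))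

/-- The initial state |ψ_in⟩ = (|00⟩ + |01⟩)/√2. -/
noncomputable def psiIn : Fin 2 × Fin 2 → ℂ :=
  fun pr => if pr.1 = 0 then (1 / Real.sqrt 2 : ℝ) else 0

/-- Player 1's payoffs of the game ((5,3),(1,1);(1,1),(3,5)). -/
def payA : Fin 2 → Fin 2 → ℝ := ![![5, 1], ![1, 3]]

/-- Player 2's payoffs. -/
def payB : Fin 2 → Fin 2 → ℝ := ![![3, 1], ![1, 5]]

namespace Matrix

variable {α : Type*} {m n : Type*}

section Kronecker

variable [CommSemiring α] [Fintype m] [Fintype n] [DecidableEq m] [DecidableEq n]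
  (A : Matrix m m α) (B : Matrix n n α)

theorem kronecker_eq_kronecker_one_mul_one_kronecker :
    A ⊗ₖ B = (A ⊗ₖ (1 : Matrix n n α)) * ((1 : Matrix m m α) ⊗ₖ B) := by
  rw [← mul_kronecker_mul, Matrix.mul_one, Matrix.one_mul]

theorem kronecker_eq_one_kronecker_mul_kronecker_one :
    A ⊗ₖ B = ((1 : Matrix m m α) ⊗ₖ B) * (A ⊗ₖ (1 : Matrix n n α)) := by
  rw [← mul_kronecker_mul, Matrix.mul_one, Matrix.one_mul]

end Kronecker

theorem IsHermitian.kronecker [CommRing α] [StarRing α] {A : Matrix m m α} {B : Matrix n n α}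
    (hA : A.IsHermitian) (hB : B.IsHermitian) : (A ⊗ₖ B).IsHermitian := by
  rw [IsHermitian, conjTranspose_kronecker, hA, hB]

theorem IsHermitian.mul_vecMulVec_star_mul [Fintype n] [Semiring α] [StarRing α]
    {U : Matrix n n α} (hU : U.IsHermitian) (v : n → α) :
    U * vecMulVec v (star v) * U = vecMulVec (U *ᵥ v) (star (U *ᵥ v)) := by
  rw [mul_vecMulVec, vecMulVec_mul, star_mulVec, hU.eq]

theorem trace_diagonal_mul_vecMulVec_star [Fintype n] [DecidableEq n] [CommSemiring α]
    [StarRing α] (d v : n → α) :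
    (diagonal d * vecMulVec v (star v)).trace = ∑ i, d i * (v i * star (v i)) := by
  simp only [mul_vecMulVec, trace_vecMulVec, dotProduct, mulVec_diagonal, Pi.star_apply, mul_assoc]

end Matrix

theorem sigmaX_isHermitian : sigmaX.IsHermitian := by
  ext i j
  fin_cases i <;> fin_cases j <;> simp [sigmaX]

theorem MWfinal_of_one_kronecker_sigmaX_conj_eq {ρ : Matrix (Fin 2 × Fin 2) (Fin 2 × Fin 2) ℂ}
    (hρ : (1 ⊗ₖ sigmaX) * ρ * (1 ⊗ₖ sigmaX) = ρ) (p q : ℝ) :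
    MWfinal ρ p q = (p : ℂ) • ρ + ((1 - p : ℝ) : ℂ) • ((sigmaX ⊗ₖ 1) * ρ * (sigmaX ⊗ₖ 1)) := by
  have hflip : (sigmaX ⊗ₖ sigmaX) * ρ * (sigmaX ⊗ₖ sigmaX) = (sigmaX ⊗ₖ 1) * ρ * (sigmaX ⊗ₖ 1) :=
    calc (sigmaX ⊗ₖ sigmaX) * ρ * (sigmaX ⊗ₖ sigmaX)
        = (sigmaX ⊗ₖ 1) * ((1 ⊗ₖ sigmaX) * ρ * (1 ⊗ₖ sigmaX)) * (sigmaX ⊗ₖ 1) := by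
          nth_rw 2 [kronecker_eq_one_kronecker_mul_kronecker_one]
          rw [kronecker_eq_kronecker_one_mul_one_kronecker]
          simp only [Matrix.mul_assoc]
      _ = (sigmaX ⊗ₖ 1) * ρ * (sigmaX ⊗ₖ 1) := by rw [hρ]
  rw [MWfinal, hρ, hflip, one_kronecker_one, Matrix.one_mul, Matrix.mul_one]
  push_cast
  module

noncomputable def rowState (i : Fin 2) : Fin 2 × Fin 2 → ℂ :=
  fun pr => if pr.1 = i then (1 / Real.sqrt 2 : ℝ) else 0

theorem one_kronecker_sigmaX_mulVec_rowState (i : Fin 2) :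
    (1 ⊗ₖ sigmaX) *ᵥ rowState i = rowState i := by
  funext ⟨a, b⟩
  fin_cases i <;> fin_cases a <;> fin_cases b <;>
    simp [rowState, sigmaX, mulVec, dotProduct, Fintype.sum_prod_type, one_apply]

theorem sigmaX_kronecker_one_mulVec_rowState_zero :
    (sigmaX ⊗ₖ 1) *ᵥ rowState 0 = rowState 1 := by
  funext ⟨a, b⟩
  fin_cases a <;> fin_cases b <;>
    simp [rowState, sigmaX, mulVec, dotProduct, Fintype.sum_prod_type, one_apply]

theorem trace_diagonal_mul_vecMulVec_rowState (f : Fin 2 → Fin 2 → ℝ) (i : Fin 2) :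
    (diagonal (fun pr : Fin 2 × Fin 2 => (f pr.1 pr.2 : ℂ)) *
      vecMulVec (rowState i) (star (rowState i))).trace = ((f i 0 + f i 1) / 2 : ℝ) := by
  have hsq : ((Real.sqrt 2 : ℝ) : ℂ)⁻¹ * ((Real.sqrt 2 : ℝ) : ℂ)⁻¹ = 1 / 2 := by
    rw [← mul_inv, ← Complex.ofReal_mul, Real.mul_self_sqrt zero_le_two]
    norm_num
  rw [trace_diagonal_mul_vecMulVec_star, Fintype.sum_prod_type]
  fin_cases i <;> simp [rowState, Fin.sum_univ_two] <;> rw [hsq] <;> ring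

theorem MWfinal_psiIn (p q : ℝ) :
    MWfinal (vecMulVec psiIn (star psiIn)) p q =
      (p : ℂ) • vecMulVec (rowState 0) (star (rowState 0)) +
        ((1 - p : ℝ) : ℂ) • vecMulVec (rowState 1) (star (rowState 1)) := by
  have hfix := (isHermitian_one.kronecker sigmaX_isHermitian).mul_vecMulVec_star_mul (rowState 0)
  rw [one_kronecker_sigmaX_mulVec_rowState] at hfix
  have hflip := (sigmaX_isHermitian.kronecker isHermitian_one).mul_vecMulVec_star_mul (rowState 0)
  rw [sigmaX_kronecker_one_mulVec_rowState_zero] at hflip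
  exact hflip ▸ MWfinal_of_one_kronecker_sigmaX_conj_eq hfix p q

/-- for |ψ_in⟩ = (|00⟩+|01⟩)/√2, the MW output payoffs are
π₁(p,q) = 3p + 2(1−p) and π₂(p,q) = 2p + 3(1−p), independent of q. -/
theorem stmt4 :
    ∀ p q : ℝ, p ∈ Set.Icc (0 : ℝ) 1 → q ∈ Set.Icc (0 : ℝ) 1 →
      (Matrix.diagonal (fun pr : Fin 2 × Fin 2 => (payA pr.1 pr.2 : ℂ)) *
          MWfinal (Matrix.vecMulVec psiIn (star psiIn)) p q).trace
        = ((3 * p + 2 * (1 - p) : ℝ) : ℂ) ∧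
      (Matrix.diagonal (fun pr : Fin 2 × Fin 2 => (payB pr.1 pr.2 : ℂ)) *
          MWfinal (Matrix.vecMulVec psiIn (star psiIn)) p q).trace
        = ((2 * p + 3 * (1 - p) : ℝ) : ℂ) := by
  intro p q _ _
  simp only [MWfinal_psiIn, Matrix.mul_add, Matrix.mul_smul, trace_add, trace_smul,
    trace_diagonal_mul_vecMulVec_rowState, smul_eq_mul]
  constructor <;> norm_num [payA, payB] <;> ring
end

section
/- In the 4×4 bimatrix game with rows/columns C×1, C×σₓ, Q×1, Q×σₓ and payoffs row 1 = (5,5),(0,4),(5,5),(0,4); row 2 = (4,0),(2,2),(4,0),(2,2); row 3 = (5,5),(0,4),(2,2),(4,0); row 4 = (4,0),(2,2),(0,4),(5,5), the profile (Q×σₓ, Q×σₓ) is a pure Nash equilibrium with payoff (5,5), while (Q×1, Q×1) is not a Nash equilibrium. -/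
/-- Pure Nash equilibrium of a bimatrix game. -/
def IsNash {m n : Type*} (A B : m → n → ℝ) (s : m × n) : Prop :=
  (∀ s₁' : m, A s₁' s.2 ≤ A s.1 s.2) ∧ (∀ s₂' : n, B s.1 s₂' ≤ B s.1 s.2)

theorem not_isNash_of_lt {m n : Type*} {A B : m → n → ℝ} {s : m × n} (i : m)
    (h : A s.1 s.2 < A i s.2) : ¬ IsNash A B s :=
  fun hs => (hs.1 i).not_gt h

/-- In the eMW game obtained from ((5,5),(0,4);(4,0),(2,2)) with
|ψ_in⟩ = |11⟩ (strategies ordered C×1, C×σₓ, Q×1, Q×σₓ), (Q×σₓ, Q×σₓ) is a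
pure Nash equilibrium with payoff (5,5), while (Q×1, Q×1) is not. -/
theorem stmt9 (A B : Fin 4 → Fin 4 → ℝ)
    (hA : A = ![![5, 0, 5, 0], ![4, 2, 4, 2], ![5, 0, 2, 4], ![4, 2, 0, 5]])
    (hB : B = ![![5, 4, 5, 4], ![0, 2, 0, 2], ![5, 4, 2, 0], ![0, 2, 4, 5]]) :
    IsNash A B (3, 3) ∧ A 3 3 = 5 ∧ B 3 3 = 5 ∧ ¬ IsNash A B (2, 2) := by
  subst hA hB
  refine ⟨⟨fun i => ?_, fun j => ?_⟩, rfl, rfl, not_isNash_of_lt 0 ?_⟩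
  · fin_cases i <;> simp [Matrix.cons_val] <;> norm_num
  · fin_cases j <;> simp [Matrix.cons_val] <;> norm_num
  · -- against Q×1 the row player gains by switching to C×1: 5 > 2
    simp [Matrix.cons_val]; norm_num
end

section
/- Let η₀₀, η₀₁, η₁₀, η₁₁ ≥ 0 with η₀₀+η₀₁+η₁₀+η₁₁ = 1. If the three equations (2+η₁₀)η₀₁ = (1+η₀₀)η₁₁, (2+η₀₁)η₁₀ = (1+η₀₀)η₁₁, and (3+η₀₀)η₁₁ = η₀₁η₁₀ all hold, then η₀₀ = 1 (and hence η₀₁ = η₁₀ = η₁₁ = 0). -/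
/-! Since all weights lie in `[0, 1]`, the first two equations give `η₀₁ ≤ η₁₁` and `η₁₀ ≤ η₁₁`.
Then the third gives `3 η₁₁ ≤ η₀₁ η₁₀ ≤ η₁₁² ≤ η₁₁`, so `η₁₁ = 0`, and the first two equations
force `η₀₁ = η₁₀ = 0`. -/

theorem le_of_two_add_mul_eq_mul {α : Type*} [Field α] [LinearOrder α] [IsStrictOrderedRing α]
    {a b c d : α} (ha : 0 ≤ a) (hb : 0 ≤ b) (hd : 0 ≤ d) (hc : c ≤ 2)
    (h : (2 + b) * a = c * d) : a ≤ d := by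
  nlinarith [mul_nonneg hb ha, mul_le_mul_of_nonneg_right hc hd]

/-- nonnegative η's summing to 1 satisfying the three
separability equations force η₀₀ = 1 and the rest to vanish. -/
theorem stmt13 (η₀₀ η₀₁ η₁₀ η₁₁ : ℝ)
    (h₀₀ : 0 ≤ η₀₀) (h₀₁ : 0 ≤ η₀₁) (h₁₀ : 0 ≤ η₁₀) (h₁₁ : 0 ≤ η₁₁)
    (hsum : η₀₀ + η₀₁ + η₁₀ + η₁₁ = 1)
    (e1 : (2 + η₁₀) * η₀₁ = (1 + η₀₀) * η₁₁)
    (e2 : (2 + η₀₁) * η₁₀ = (1 + η₀₀) * η₁₁)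
    (e3 : (3 + η₀₀) * η₁₁ = η₀₁ * η₁₀) :
    η₀₀ = 1 ∧ η₀₁ = 0 ∧ η₁₀ = 0 ∧ η₁₁ = 0 := by
  have h₀₁_le : η₀₁ ≤ η₁₁ := le_of_two_add_mul_eq_mul h₀₁ h₁₀ h₁₁ (by linarith) e1
  have h₁₀_le : η₁₀ ≤ η₁₁ := le_of_two_add_mul_eq_mul h₁₀ h₀₁ h₁₁ (by linarith) e2
  have hprod : η₀₁ * η₁₀ ≤ η₁₁ :=
    calc η₀₁ * η₁₀ ≤ η₁₁ * η₁₁ := mul_le_mul h₀₁_le h₁₀_le h₁₀ h₁₁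
      _ ≤ η₁₁ := mul_le_of_le_one_left h₁₁ (by linarith)
  have h₁₁_eq : η₁₁ = 0 := by linarith [mul_nonneg h₀₀ h₁₁]
  have h₀₁_eq : η₀₁ = 0 := le_antisymm (h₁₁_eq ▸ h₀₁_le) h₀₁
  have h₁₀_eq : η₁₀ = 0 := le_antisymm (h₁₁_eq ▸ h₁₀_le) h₁₀
  exact ⟨by linarith, h₀₁_eq, h₁₀_eq, h₁₁_eq⟩
end

section
/- If |ψ_in⟩ = |00⟩, then in the eMW 4×4 game (\ref{4x4}) the strategies C×1 and Q×1 are equivalent (induce identical payoff pairs against every pure strategy of the opponent), and likewise C×σₓ and Q×σₓ are equivalent; the resulting quotient game equals the classical input 2×2 game. -/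
/-! For the input state |00⟩ the only nonzero amplitude is λ₀₀, so the MW payoff
Σᵢⱼ |λ_{i+k, j+m}|² a_{ij} keeps the single term i = -k, j = -m, which is a_{km}
because negation is trivial on ℤ/2. Hence the quantum block of the 4×4 bimatrix repeats
the classical payoffs, every entry depends only on the σ-components of the two
strategies, and the C- and Q-variants of each strategy coincide. -/

lemma sum_sum_sq_norm_ite_add_eq_zero_mul {G H : Type*} [AddGroup G] [AddGroup H]
    [Fintype G] [Fintype H] [DecidableEq G] [DecidableEq H] (f : G → H → ℝ) (k : G) (m : H) :
    ∑ i, ∑ j, ‖(if i + k = 0 ∧ j + m = 0 then 1 else 0 : ℂ)‖ ^ 2 * f i j = f (-k) (-m) := by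
  have hterm (i : G) (j : H) :
      ‖(if i + k = 0 ∧ j + m = 0 then 1 else 0 : ℂ)‖ ^ 2 * f i j =
        if j = -m then (if i = -k then f i j else 0) else 0 := by
    simp only [add_eq_zero_iff_eq_neg]
    split_ifs <;> simp_all
  simp only [hterm, Fintype.sum_ite_eq']

lemma mwPayoff_ket00_eq (f : Fin 2 → Fin 2 → ℝ) :
    (fun k m => ∑ i : Fin 2, ∑ j : Fin 2,
      ‖(fun i j => if i = 0 ∧ j = 0 then (1 : ℂ) else 0) (i + k) (j + m)‖ ^ 2 * f i j) = f := by
  have neg_eq_self : ∀ x : Fin 2, -x = x := by decide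
  funext k m
  rw [sum_sum_sq_norm_ite_add_eq_zero_mul, neg_eq_self, neg_eq_self]

/-- if |ψ_in⟩ = |00⟩ then in the eMW 4×4 game the strategies
C×s and Q×s (s ∈ {1, σₓ}) are equivalent — they induce the same payoff pair
against every pure strategy of the opponent — and every payoff of the 4×4
game coincides with the corresponding classical payoff, so the quotient game
is the classical input 2×2 game.  Strategies of the 4×4 game are pairs
(c, s) ∈ Fin 2 × Fin 2, with c = 0 meaning `C` and c = 1 meaning `Q`. -/
theorem stmt18 (a b : Fin 2 → Fin 2 → ℝ)
    (l : Fin 2 → Fin 2 → ℂ) (hl : l = fun i j => if i = 0 ∧ j = 0 then 1 else 0)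
    (αq βq : Fin 2 → Fin 2 → ℝ)
    (hαq : αq = fun k m => ∑ i : Fin 2, ∑ j : Fin 2, ‖l (i + k) (j + m)‖ ^ 2 * a i j)
    (hβq : βq = fun k m => ∑ i : Fin 2, ∑ j : Fin 2, ‖l (i + k) (j + m)‖ ^ 2 * b i j)
    (A4 B4 : Fin 2 × Fin 2 → Fin 2 × Fin 2 → ℝ)
    (hA4 : A4 = fun s t => if s.1 = 1 ∧ t.1 = 1 then αq s.2 t.2 else a s.2 t.2)
    (hB4 : B4 = fun s t => if s.1 = 1 ∧ t.1 = 1 then βq s.2 t.2 else b s.2 t.2) :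
    (∀ (s : Fin 2) (t : Fin 2 × Fin 2),
        A4 (0, s) t = A4 (1, s) t ∧ B4 (0, s) t = B4 (1, s) t) ∧
    (∀ (s : Fin 2) (t : Fin 2 × Fin 2),
        A4 t (0, s) = A4 t (1, s) ∧ B4 t (0, s) = B4 t (1, s)) ∧
    (∀ s t : Fin 2 × Fin 2, A4 s t = a s.2 t.2 ∧ B4 s t = b s.2 t.2) := by
  subst hl
  have hα : αq = a := hαq.trans (mwPayoff_ket00_eq a)
  have hβ : βq = b := hβq.trans (mwPayoff_ket00_eq b)
  have payoff_eq_classical (s t : Fin 2 × Fin 2) : A4 s t = a s.2 t.2 ∧ B4 s t = b s.2 t.2 := by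
    simp only [hA4, hB4, hα, hβ, ite_self, and_self]
  exact ⟨fun s t => by simp only [payoff_eq_classical, and_self],
    fun s t => by simp only [payoff_eq_classical, and_self], payoff_eq_classical⟩
end

section
/- In the Marinatto–Weber scheme applied to Battle of the Sexes with payoffs (α,β),(γ,γ);(γ,γ),(β,α) (α>β>γ) and |ψ_in⟩ = (|00⟩+|11⟩)/√2, both profiles (p,q) = (1,1) and (p,q) = (0,0) are Nash equilibria of the output game, each giving both players payoff (α+β)/2. -/
/-!
The output game is a symmetric coordination game: matching strategies pay `(α + β) / 2`,
mismatching ones pay `γ`. Against a pure opponent strategy the payoff is affine in one's own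
probability, with slope `±((α + β) / 2 - γ)`, and `γ < (α + β) / 2`, so matching the opponent
is a best response.
-/

/-- Expected payoff in the symmetric coordination game paying `a` on the diagonal and `c` off it,
when the players play their first strategy with probabilities `p` and `q`. -/
def coordPayoff (a c p q : ℝ) : ℝ :=
  p * q * a + p * (1 - q) * c + (1 - p) * q * c + (1 - p) * (1 - q) * a

namespace coordPayoff

variable (a c : ℝ)

theorem comm (p q : ℝ) : coordPayoff a c p q = coordPayoff a c q p := by
  unfold coordPayoff; ring

@[simp] theorem one_one : coordPayoff a c 1 1 = a := by
  unfold coordPayoff; ring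

@[simp] theorem zero_zero : coordPayoff a c 0 0 = a := by
  unfold coordPayoff; ring

theorem one_right (p : ℝ) : coordPayoff a c p 1 = c + p * (a - c) := by
  unfold coordPayoff; ring

theorem zero_right (p : ℝ) : coordPayoff a c p 0 = a - p * (a - c) := by
  unfold coordPayoff; ring

variable {a c}

theorem le_one_one (hca : c ≤ a) {p : ℝ} (hp : p ≤ 1) :
    coordPayoff a c p 1 ≤ coordPayoff a c 1 1 := by
  rw [one_right, one_one]
  nlinarith

theorem le_zero_zero (hca : c ≤ a) {p : ℝ} (hp : 0 ≤ p) :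
    coordPayoff a c p 0 ≤ coordPayoff a c 0 0 := by
  rw [zero_right, zero_zero]
  nlinarith

end coordPayoff

/-- in the MW output game for Battle of the Sexes with
|ψ_in⟩ = (|00⟩+|11⟩)/√2, where
π₁(p,q) = π₂(p,q) = (pq + (1−p)(1−q))·(α+β)/2 + (p(1−q) + (1−p)q)·γ,
both (1,1) and (0,0) are Nash equilibria giving each player (α+β)/2. -/
theorem stmt19 (α β γ : ℝ) (h1 : α > β) (h2 : β > γ)
    (π₁ π₂ : ℝ → ℝ → ℝ)
    (hπ₁ : π₁ = fun p q => p * q * ((α + β) / 2) + p * (1 - q) * γ +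
                  (1 - p) * q * γ + (1 - p) * (1 - q) * ((α + β) / 2))
    (hπ₂ : π₂ = fun p q => p * q * ((α + β) / 2) + p * (1 - q) * γ +
                  (1 - p) * q * γ + (1 - p) * (1 - q) * ((α + β) / 2)) :
    ((∀ p' ∈ Set.Icc (0 : ℝ) 1, π₁ p' 1 ≤ π₁ 1 1) ∧
     (∀ q' ∈ Set.Icc (0 : ℝ) 1, π₂ 1 q' ≤ π₂ 1 1)) ∧
    ((∀ p' ∈ Set.Icc (0 : ℝ) 1, π₁ p' 0 ≤ π₁ 0 0) ∧
     (∀ q' ∈ Set.Icc (0 : ℝ) 1, π₂ 0 q' ≤ π₂ 0 0)) ∧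
    π₁ 1 1 = (α + β) / 2 ∧ π₂ 1 1 = (α + β) / 2 ∧
    π₁ 0 0 = (α + β) / 2 ∧ π₂ 0 0 = (α + β) / 2 := by
  have hπ₁' : π₁ = coordPayoff ((α + β) / 2) γ := hπ₁
  have hπ₂' : π₂ = coordPayoff ((α + β) / 2) γ := hπ₂
  have hγ : γ ≤ (α + β) / 2 := by linarith
  subst hπ₁' hπ₂'
  refine ⟨⟨fun p hp => ?_, fun q hq => ?_⟩, ⟨fun p hp => ?_, fun q hq => ?_⟩,
    by simp, by simp, by simp, by simp⟩
  · exact coordPayoff.le_one_one hγ hp.2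
  · rw [coordPayoff.comm _ _ 1 q]; exact coordPayoff.le_one_one hγ hq.2
  · exact coordPayoff.le_zero_zero hγ hp.1
  · rw [coordPayoff.comm _ _ 0 q]; exact coordPayoff.le_zero_zero hγ hq.1
end
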